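/- arXiv:1003.2649 — 4 statements merged into one kernel-verified Lean document; each statement's English description precedes it below -/
import Mathlib

section
/- For every stochastic matrix p on a nonempty finite set S, Doeblin's ergodicity coefficient satisfies α(p) = sup{ α ∈ [0,1] : there exist E ∈ ℰ and M ∈ 𝒫 with p = α·E + (1−α)·M }. -/
/-- A stochastic matrix on a finite set `S`: nonnegative entries, each row sums to 1. -/
def IsStochastic {S : Type*} [Fintype S] (p : Matrix S S ℝ) : Prop :=
  (∀ i j, 0 ≤ p i j) ∧ ∀ i, ∑ j, p i j = 1

/-- A matrix all of whose rows are identical. -/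
def IsConstRow {S : Type*} (E : Matrix S S ℝ) : Prop :=
  ∀ i i' j, E i j = E i' j

/-- Doeblin's ergodicity coefficient `α(p) = Σ_j min_i p(i,j)`. -/
noncomputable def doeblin {S : Type*} [Fintype S] [Nonempty S] (p : Matrix S S ℝ) : ℝ :=
  ∑ j, Finset.univ.inf' Finset.univ_nonempty fun i => p i j


/-!
Any decomposition `p = α • E + (1 - α) • M` with `E` having identical rows `e` forces
`α * e j ≤ p i j` for all `i`, hence `α * e j ≤ min_i p i j`, and summing over `j` gives
`α ≤ α(p)`. Conversely, the column minima `m j = min_i p i j` form a nonnegative row of total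
mass `α(p)` lying below every row of `p`, so `p` splits as the constant-row matrix `m` plus the
nonnegative remainder `p - m`, whose rows have mass `1 - α(p)`; normalizing both pieces
exhibits `α(p)` itself as an admissible coefficient.
-/

open Finset

section NormalizeRows

variable {S : Type*} [Fintype S]

/-- The uniform fallback on rows of zero mass lets the splitting below cover `α(p) = 0` and
`α(p) = 1` without a case distinction. -/
noncomputable def normalizeRows (q : Matrix S S ℝ) : Matrix S S ℝ :=
  fun i j => if ∑ k, q i k = 0 then (Fintype.card S : ℝ)⁻¹ else q i j / ∑ k, q i k

variable {q : Matrix S S ℝ}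

theorem isStochastic_normalizeRows [Nonempty S] (hq : ∀ i j, 0 ≤ q i j) :
    IsStochastic (normalizeRows q) := by
  refine ⟨fun i j => ?_, fun i => ?_⟩
  · unfold normalizeRows
    split_ifs
    · positivity
    · exact div_nonneg (hq i j) (sum_nonneg fun k _ => hq i k)
  · unfold normalizeRows
    split_ifs with h
    · simp
    · rw [← sum_div, div_self h]

theorem isConstRow_normalizeRows (hq : IsConstRow q) : IsConstRow (normalizeRows q) := by
  intro i i' j
  have hrow : q i = q i' := funext (hq i i')
  simp only [normalizeRows, hrow]

theorem sum_mul_normalizeRows (hq : ∀ i j, 0 ≤ q i j) (i j : S) :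
    (∑ k, q i k) * normalizeRows q i j = q i j := by
  by_cases h : ∑ k, q i k = 0
  · rw [h, zero_mul, (sum_eq_zero_iff_of_nonneg fun k _ => hq i k).1 h j (mem_univ j)]
  · simp only [normalizeRows, if_neg h]
    exact mul_div_cancel₀ _ h

theorem eq_smul_normalizeRows_add_smul_normalizeRows {p r : Matrix S S ℝ} {a : ℝ}
    (hq : ∀ i j, 0 ≤ q i j) (hr : ∀ i j, 0 ≤ r i j) (hqa : ∀ i, ∑ k, q i k = a)
    (hra : ∀ i, ∑ k, r i k = 1 - a) (hp : p = q + r) :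
    p = a • normalizeRows q + (1 - a) • normalizeRows r := by
  ext i j
  simp only [hp, Matrix.add_apply, Matrix.smul_apply, smul_eq_mul]
  rw [← sum_mul_normalizeRows hq i j, ← sum_mul_normalizeRows hr i j, hqa, hra]

end NormalizeRows

section Doeblin

variable {S : Type*} [Fintype S] [Nonempty S] {p : Matrix S S ℝ}

noncomputable def colMin (p : Matrix S S ℝ) (j : S) : ℝ :=
  univ.inf' univ_nonempty fun i => p i j

theorem doeblin_eq_sum_colMin (p : Matrix S S ℝ) : doeblin p = ∑ j, colMin p j := rfl

theorem colMin_le (p : Matrix S S ℝ) (i j : S) : colMin p j ≤ p i j :=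
  inf'_le _ (mem_univ i)

theorem colMin_nonneg (hp : ∀ i j, 0 ≤ p i j) (j : S) : 0 ≤ colMin p j :=
  le_inf' _ _ fun i _ => hp i j

theorem sum_sub_colMin (hp : IsStochastic p) (i : S) :
    ∑ j, (p i j - colMin p j) = 1 - doeblin p := by
  rw [sum_sub_distrib, hp.2 i, doeblin_eq_sum_colMin]

theorem doeblin_nonneg (hp : ∀ i j, 0 ≤ p i j) : 0 ≤ doeblin p :=
  sum_nonneg fun j _ => colMin_nonneg hp j

theorem doeblin_le_one (hp : IsStochastic p) : doeblin p ≤ 1 := by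
  obtain ⟨i⟩ := ‹Nonempty S›
  linarith [sum_nonneg fun j (_ : j ∈ univ) => sub_nonneg.2 (colMin_le p i j),
    sum_sub_colMin hp i]

theorem le_doeblin_of_eq_smul_add_smul {E M : Matrix S S ℝ} {α : ℝ} (hα : α ≤ 1)
    (hE : IsStochastic E) (hEc : IsConstRow E) (hM : ∀ i j, 0 ≤ M i j)
    (h : p = α • E + (1 - α) • M) : α ≤ doeblin p := by
  obtain ⟨i₀⟩ := ‹Nonempty S›
  have hcol : ∀ j, α * E i₀ j ≤ colMin p j := fun j =>
    le_inf' _ _ fun i _ => by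
      have hpij : p i j = α * E i₀ j + (1 - α) * M i j := by
        rw [h, hEc i₀ i j]; rfl
      nlinarith [hM i j]
  calc α = ∑ j, α * E i₀ j := by rw [← mul_sum, hE.2 i₀, mul_one]
    _ ≤ ∑ j, colMin p j := sum_le_sum fun j _ => hcol j
    _ = doeblin p := (doeblin_eq_sum_colMin p).symm

def doeblinCoeffs (p : Matrix S S ℝ) : Set ℝ :=
  {α : ℝ | α ∈ Set.Icc (0 : ℝ) 1 ∧
    ∃ E M : Matrix S S ℝ, IsStochastic E ∧ IsConstRow E ∧ IsStochastic M ∧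
      p = α • E + (1 - α) • M}

theorem doeblin_mem_doeblinCoeffs (hp : IsStochastic p) : doeblin p ∈ doeblinCoeffs p := by
  set m : Matrix S S ℝ := fun _ j => colMin p j
  have hm : ∀ i j, 0 ≤ m i j := fun _ j => colMin_nonneg hp.1 j
  have hpm : ∀ i j, 0 ≤ (p - m) i j := fun i j => sub_nonneg.2 (colMin_le p i j)
  refine ⟨⟨doeblin_nonneg hp.1, doeblin_le_one hp⟩, normalizeRows m, normalizeRows (p - m),
    isStochastic_normalizeRows hm, isConstRow_normalizeRows fun _ _ _ => rfl,
    isStochastic_normalizeRows hpm, ?_⟩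
  exact eq_smul_normalizeRows_add_smul_normalizeRows hm hpm
    (fun _ => (doeblin_eq_sum_colMin p).symm) (sum_sub_colMin hp) (add_sub_cancel m p).symm

theorem isGreatest_doeblinCoeffs (hp : IsStochastic p) :
    IsGreatest (doeblinCoeffs p) (doeblin p) :=
  ⟨doeblin_mem_doeblinCoeffs hp, fun _ ⟨⟨_, hα₁⟩, _, _, hE, hEc, hM, h⟩ =>
    le_doeblin_of_eq_smul_add_smul hα₁ hE hEc hM.1 h⟩

end Doeblin

theorem doeblin_eq_sSup {S : Type*} [Fintype S] [Nonempty S]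
    (p : Matrix S S ℝ) (hp : IsStochastic p) :
    doeblin p = sSup {α : ℝ | α ∈ Set.Icc (0 : ℝ) 1 ∧
      ∃ E M : Matrix S S ℝ, IsStochastic E ∧ IsConstRow E ∧ IsStochastic M ∧
        p = α • E + (1 - α) • M} :=
  (isGreatest_doeblinCoeffs hp).csSup_eq.symm
end

section
/- Let (p_k)_{k≥0} be a sequence of stochastic matrices on a nonempty finite set S. If there exists a strictly increasing sequence of positive integers (n_k)_{k≥0} such that Σ_{k=0}^∞ α(∏_{i=n_k}^{n_{k+1}−1} p_i) = +∞, then the sequence (p_k) is weakly ergodic: for all m ≥ 0 and all i, j, s ∈ S, lim_{n→∞} |(∏_{k=m}^{n} p_k)(i,s) − (∏_{k=m}^{n} p_k)(j,s)| = 0. -/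
open Filter

/-- The ordered matrix product `p_m * p_{m+1} * ⋯ * p_n`. -/
noncomputable def prodFromTo {S : Type*} [Fintype S] [DecidableEq S]
    (p : ℕ → Matrix S S ℝ) (m n : ℕ) : Matrix S S ℝ :=
  ((List.range (n + 1 - m)).map fun k => p (m + k)).prod

/-- Weak ergodicity of a sequence of stochastic matrices. -/
def WeaklyErgodic {S : Type*} [Fintype S] [DecidableEq S] (p : ℕ → Matrix S S ℝ) : Prop :=
  ∀ (m : ℕ) (i j s : S),
    Tendsto (fun n => |prodFromTo p m n i s - prodFromTo p m n j s|) atTop (nhds 0)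

/-!
For a stochastic matrix `A`, each entry of `A g` is a fixed combination `Σ_k (min_i A i k) g k`
plus a nonnegative combination of `g` of total weight `1 - α(A)`, so `A` shrinks the oscillation
`max g - min g` by the factor `1 - α(A)`. Splitting `p_m ⋯ p_n` at the block boundaries `n_k`,
the oscillation of a column of `p_m ⋯ p_n` is at most
`∏_{m ≤ k < N} (1 - α_k) ≤ exp (-Σ_{m ≤ k < N} α_k)`, which tends to `0` as `N → ∞` because the
block coefficients `α_k` have a divergent sum.
-/

open Finset Matrix Real

section Oscillation

variable {S : Type*} [Fintype S] [Nonempty S]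

noncomputable def osc (g : S → ℝ) : ℝ :=
  univ.sup' univ_nonempty g - univ.inf' univ_nonempty g

lemma osc_nonneg (g : S → ℝ) : 0 ≤ osc g := by
  obtain ⟨i⟩ := ‹Nonempty S›
  exact sub_nonneg.2 ((inf'_le g (mem_univ i)).trans (le_sup' g (mem_univ i)))

lemma abs_sub_le_osc (g : S → ℝ) (i j : S) : |g i - g j| ≤ osc g :=
  abs_sub_le_iff.2
    ⟨sub_le_sub (le_sup' g (mem_univ i)) (inf'_le g (mem_univ j)),
      sub_le_sub (le_sup' g (mem_univ j)) (inf'_le g (mem_univ i))⟩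

lemma osc_le_of_forall_sub_le {g : S → ℝ} {c : ℝ} (h : ∀ i j, g i - g j ≤ c) : osc g ≤ c := by
  obtain ⟨i, -, hi⟩ := exists_mem_eq_sup' univ_nonempty g
  obtain ⟨j, -, hj⟩ := exists_mem_eq_inf' univ_nonempty g
  rw [osc, hi, hj]
  exact h i j

lemma osc_single_one_le_one [DecidableEq S] (s : S) : osc (Pi.single s (1 : ℝ)) ≤ 1 :=
  osc_le_of_forall_sub_le fun _ _ => by
    simp only [Pi.single_apply]
    split_ifs <;> norm_num

end Oscillation

section Doeblin

variable {S : Type*} [Fintype S] [DecidableEq S]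

lemma isStochastic_iff_mem_rowStochastic {A : Matrix S S ℝ} :
    IsStochastic A ↔ A ∈ rowStochastic ℝ S :=
  mem_rowStochastic_iff_sum.symm

variable [Nonempty S]

lemma doeblin_nonneg_s11 {A : Matrix S S ℝ} (hA : A ∈ rowStochastic ℝ S) : 0 ≤ doeblin A :=
  sum_nonneg fun _ _ => le_inf' _ _ fun _ _ => nonneg_of_mem_rowStochastic hA

lemma doeblin_le_one_s11 {A : Matrix S S ℝ} (hA : A ∈ rowStochastic ℝ S) : doeblin A ≤ 1 := by
  obtain ⟨i⟩ := ‹Nonempty S›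
  calc doeblin A ≤ ∑ j, A i j := sum_le_sum fun j _ => inf'_le _ (mem_univ i)
    _ = 1 := sum_row_of_mem_rowStochastic hA i

lemma osc_mulVec_le {A : Matrix S S ℝ} (hA : A ∈ rowStochastic ℝ S) (g : S → ℝ) :
    osc (A *ᵥ g) ≤ (1 - doeblin A) * osc g := by
  set colMin : S → ℝ := fun k => univ.inf' univ_nonempty fun i => A i k
  set M := univ.sup' univ_nonempty g
  set L := univ.inf' univ_nonempty g
  have hw_nonneg (i k : S) : 0 ≤ A i k - colMin k := sub_nonneg.2 (inf'_le _ (mem_univ i))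
  have hw_sum (i : S) : ∑ k, (A i k - colMin k) = 1 - doeblin A := by
    rw [sum_sub_distrib, sum_row_of_mem_rowStochastic hA]
    rfl
  have hsplit (i : S) :
      (A *ᵥ g) i = ∑ k, colMin k * g k + ∑ k, (A i k - colMin k) * g k := by
    simp only [mulVec, dotProduct, ← sum_add_distrib]
    exact sum_congr rfl fun k _ => by ring
  have hupper (i : S) : ∑ k, (A i k - colMin k) * g k ≤ (1 - doeblin A) * M := by
    rw [← hw_sum i, sum_mul]
    exact sum_le_sum fun k _ => mul_le_mul_of_nonneg_left (le_sup' g (mem_univ k)) (hw_nonneg i k)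
  have hlower (i : S) : (1 - doeblin A) * L ≤ ∑ k, (A i k - colMin k) * g k := by
    rw [← hw_sum i, sum_mul]
    exact sum_le_sum fun k _ => mul_le_mul_of_nonneg_left (inf'_le g (mem_univ k)) (hw_nonneg i k)
  refine osc_le_of_forall_sub_le fun i j => ?_
  rw [hsplit i, hsplit j, osc, mul_sub]
  linarith [hupper i, hlower j]

lemma osc_mulVec_le_osc {A : Matrix S S ℝ} (hA : A ∈ rowStochastic ℝ S) (g : S → ℝ) :
    osc (A *ᵥ g) ≤ osc g :=
  (osc_mulVec_le hA g).trans
    (mul_le_of_le_one_left (osc_nonneg g) (sub_le_self _ (doeblin_nonneg_s11 hA)))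

end Doeblin

section IntervalProducts

variable {S : Type*} [Fintype S] [DecidableEq S] (p : ℕ → Matrix S S ℝ)

noncomputable def prodIco (a b : ℕ) : Matrix S S ℝ :=
  ((List.range (b - a)).map fun k => p (a + k)).prod

lemma prodFromTo_eq_prodIco (m n : ℕ) : prodFromTo p m n = prodIco p m (n + 1) := rfl

lemma prodFromTo_sub_one_eq_prodIco {a b : ℕ} (hb : 0 < b) :
    prodFromTo p a (b - 1) = prodIco p a b := by
  rw [prodFromTo_eq_prodIco, Nat.sub_add_cancel hb]

lemma prodIco_mul_prodIco {a b c : ℕ} (hab : a ≤ b) (hbc : b ≤ c) :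
    prodIco p a b * prodIco p b c = prodIco p a c := by
  obtain ⟨d, rfl⟩ := Nat.exists_eq_add_of_le hab
  obtain ⟨e, rfl⟩ := Nat.exists_eq_add_of_le hbc
  rw [prodIco, prodIco, prodIco, Nat.add_sub_cancel_left, Nat.add_sub_cancel_left,
    show a + d + e - a = d + e by omega, List.range_add, List.map_append, List.prod_append,
    List.map_map]
  simp only [Function.comp_def, Nat.add_assoc]

lemma prodIco_mem_rowStochastic (hp : ∀ k, p k ∈ rowStochastic ℝ S) (a b : ℕ) :
    prodIco p a b ∈ rowStochastic ℝ S :=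
  Submonoid.list_prod_mem _ fun A hA => by
    obtain ⟨k, -, rfl⟩ := List.mem_map.1 hA
    exact hp _

variable [Nonempty S]

lemma osc_prodIco_mulVec_le (hp : ∀ k, p k ∈ rowStochastic ℝ S) {t : ℕ → ℕ} (ht : Monotone t)
    {a b n : ℕ} (hab : a ≤ b) (hbn : t b ≤ n) (g : S → ℝ) :
    osc (prodIco p (t a) n *ᵥ g) ≤
      (∏ k ∈ Ico a b, (1 - doeblin (prodIco p (t k) (t (k + 1))))) * osc g := by
  induction hab using Nat.decreasingInduction with
  | self => simpa using osc_mulVec_le_osc (prodIco_mem_rowStochastic p hp _ _) g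
  | of_succ a hab ih =>
    have hblock := prodIco_mem_rowStochastic p hp (t a) (t (a + 1))
    rw [← prodIco_mul_prodIco p (ht a.le_succ) ((ht hab).trans hbn), ← mulVec_mulVec,
      prod_eq_prod_Ico_succ_bot hab, mul_assoc]
    exact (osc_mulVec_le hblock _).trans
      (mul_le_mul_of_nonneg_left ih (sub_nonneg.2 (doeblin_le_one_s11 hblock)))

lemma abs_sub_prodFromTo_le (hp : ∀ k, p k ∈ rowStochastic ℝ S) {t : ℕ → ℕ} (ht : Monotone t)
    {m N n : ℕ} (hm : m ≤ t m) (hmN : m ≤ N) (hN : t N ≤ n + 1) (i j s : S) :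
    |prodFromTo p m n i s - prodFromTo p m n j s| ≤
      ∏ k ∈ Ico m N, (1 - doeblin (prodIco p (t k) (t (k + 1)))) := by
  have hsplit : prodFromTo p m n = prodIco p m (t m) * prodIco p (t m) (n + 1) :=
    (prodIco_mul_prodIco p hm ((ht hmN).trans hN)).symm
  have hfactors_nonneg : ∀ k ∈ Ico m N, 0 ≤ 1 - doeblin (prodIco p (t k) (t (k + 1))) :=
    fun k _ => sub_nonneg.2 (doeblin_le_one_s11 (prodIco_mem_rowStochastic p hp _ _))
  calc |prodFromTo p m n i s - prodFromTo p m n j s|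
      ≤ osc (prodFromTo p m n *ᵥ Pi.single s 1) := by
        simpa only [mulVec_single_one, col_apply] using
          abs_sub_le_osc (prodFromTo p m n *ᵥ Pi.single s 1) i j
    _ ≤ osc (prodIco p (t m) (n + 1) *ᵥ Pi.single s 1) := by
        rw [hsplit, ← mulVec_mulVec]
        exact osc_mulVec_le_osc (prodIco_mem_rowStochastic p hp _ _) _
    _ ≤ (∏ k ∈ Ico m N, (1 - doeblin (prodIco p (t k) (t (k + 1))))) *
          osc (Pi.single s (1 : ℝ)) := osc_prodIco_mulVec_le p hp ht hmN hN _
    _ ≤ ∏ k ∈ Ico m N, (1 - doeblin (prodIco p (t k) (t (k + 1)))) :=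
        mul_le_of_le_one_right (prod_nonneg hfactors_nonneg) (osc_single_one_le_one s)

end IntervalProducts

lemma prod_one_sub_le_exp_neg_sum {ι : Type*} (s : Finset ι) {f : ι → ℝ} (hf : ∀ i ∈ s, f i ≤ 1) :
    ∏ i ∈ s, (1 - f i) ≤ exp (-∑ i ∈ s, f i) := by
  rw [← sum_neg_distrib, exp_sum]
  exact prod_le_prod (fun i hi => sub_nonneg.2 (hf i hi)) fun i _ => one_sub_le_exp_neg _

theorem doeblin_sufficient_weak_ergodicity_general {S : Type*} [Fintype S] [Nonempty S] [DecidableEq S]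
    (p : ℕ → Matrix S S ℝ) (hp : ∀ k, IsStochastic (p k))
    (nseq : ℕ → ℕ) (hmono : StrictMono nseq)
    (hdiv : Tendsto
      (fun N => ∑ k ∈ Finset.range N, doeblin (prodFromTo p (nseq k) (nseq (k + 1) - 1)))
      atTop atTop) :
    WeaklyErgodic p := by
  intro m i j s
  have hstoch := fun k => isStochastic_iff_mem_rowStochastic.1 (hp k)
  set α : ℕ → ℝ := fun k => doeblin (prodIco p (nseq k) (nseq (k + 1)))
  have hblock (k : ℕ) :
      prodFromTo p (nseq k) (nseq (k + 1) - 1) = prodIco p (nseq k) (nseq (k + 1)) :=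
    prodFromTo_sub_one_eq_prodIco p ((Nat.zero_le _).trans_lt (hmono k.lt_succ_self))
  have htail : Tendsto (fun N => ∑ k ∈ Ico m N, α k) atTop atTop := by
    simp only [hblock] at hdiv
    refine (tendsto_atTop_add_const_right _ (-∑ k ∈ range m, α k) hdiv).congr' ?_
    filter_upwards [eventually_ge_atTop m] with N hN
    rw [sum_Ico_eq_sub _ hN, sub_eq_add_neg]
  refine tendsto_order.2
    ⟨fun a ha => .of_forall fun _ => ha.trans_le (abs_nonneg _), fun ε hε => ?_⟩
  obtain ⟨N, hN, hmN⟩ := ((htail.eventually_gt_atTop (-log ε)).and (eventually_ge_atTop m)).exists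
  filter_upwards [eventually_ge_atTop (nseq N)] with n hn
  calc |prodFromTo p m n i s - prodFromTo p m n j s|
      ≤ ∏ k ∈ Ico m N, (1 - α k) :=
        abs_sub_prodFromTo_le p hstoch hmono.monotone hmono.le_apply hmN (by omega) i j s
    _ ≤ exp (-∑ k ∈ Ico m N, α k) :=
        prod_one_sub_le_exp_neg_sum _ fun _ _ =>
          doeblin_le_one_s11 (prodIco_mem_rowStochastic p hstoch _ _)
    _ < ε := by
        rw [← exp_log hε]
        exact exp_lt_exp.2 (by linarith)

theorem doeblin_sufficient_weak_ergodicity {S : Type*} [Fintype S] [Nonempty S] [DecidableEq S]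
    (p : ℕ → Matrix S S ℝ) (hp : ∀ k, IsStochastic (p k))
    (nseq : ℕ → ℕ) (hmono : StrictMono nseq) (hpos : ∀ k, 0 < nseq k)
    (hdiv : Tendsto
      (fun N => ∑ k ∈ Finset.range N, doeblin (prodFromTo p (nseq k) (nseq (k + 1) - 1)))
      atTop atTop) :
    WeaklyErgodic p :=
  doeblin_sufficient_weak_ergodicity_general p hp nseq hmono hdiv
end

section
/- Let (p_k)_{k≥0} be a weakly ergodic sequence of stochastic matrices on a nonempty finite set S. Then for every m ≥ 0 there exists n ≥ m such that α(∏_{k=m}^{n} p_k) ≥ 1/2; consequently, there exists a strictly increasing sequence of positive integers (n_k)_{k≥0} such that Σ_{k=0}^∞ α(∏_{i=n_k}^{n_{k+1}−1} p_i) = +∞. -/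
/-!
Once all rows of `p_m ⋯ p_n` agree entrywise up to `ε = 1 / (2 |S|)`, which weak ergodicity
guarantees for large `n`, every column minimum is at least the entry of a fixed row minus `ε`;
summing over the columns gives `α ≥ 1 - |S| ε = 1 / 2`. Chaining such blocks `[n_k, n_{k+1} - 1]`
produces a series whose terms are all at least `1 / 2`.
-/

open Filter

open Finset

lemma isStochastic_iff_mem_rowStochastic_s13 {S : Type*} [Fintype S] [DecidableEq S]
    {q : Matrix S S ℝ} : IsStochastic q ↔ q ∈ Matrix.rowStochastic ℝ S :=
  Matrix.mem_rowStochastic_iff_sum.symm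

lemma isStochastic_prodFromTo {S : Type*} [Fintype S] [DecidableEq S]
    {p : ℕ → Matrix S S ℝ} (hp : ∀ k, IsStochastic (p k)) (m n : ℕ) :
    IsStochastic (prodFromTo p m n) := by
  refine isStochastic_iff_mem_rowStochastic_s13.2 (Submonoid.list_prod_mem _ ?_)
  simp only [List.mem_map]
  rintro _ ⟨k, -, rfl⟩
  exact isStochastic_iff_mem_rowStochastic_s13.1 (hp _)

lemma IsStochastic.one_sub_card_mul_le_doeblin {S : Type*} [Fintype S] [Nonempty S]
    {q : Matrix S S ℝ} (hq : IsStochastic q) {ε : ℝ}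
    (hε : ∀ i j s, |q i s - q j s| ≤ ε) :
    1 - Fintype.card S * ε ≤ doeblin q := by
  obtain ⟨i₀⟩ := ‹Nonempty S›
  have hcol : ∀ s, q i₀ s - ε ≤ univ.inf' univ_nonempty fun i => q i s := fun s =>
    (le_inf'_iff _ _).2 fun i _ => by linarith [le_abs_self (q i₀ s - q i s), hε i₀ i s]
  calc 1 - Fintype.card S * ε = ∑ s, (q i₀ s - ε) := by
        rw [sum_sub_distrib, hq.2 i₀, sum_const, card_univ, nsmul_eq_mul]
    _ ≤ doeblin q := sum_le_sum fun s _ => hcol s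

lemma WeaklyErgodic.eventually_abs_sub_lt {S : Type*} [Fintype S] [DecidableEq S]
    {p : ℕ → Matrix S S ℝ} (herg : WeaklyErgodic p) (m : ℕ) {ε : ℝ} (hε : 0 < ε) :
    ∀ᶠ n in atTop, ∀ i j s, |prodFromTo p m n i s - prodFromTo p m n j s| < ε :=
  eventually_all.2 fun i => eventually_all.2 fun j => eventually_all.2 fun s =>
    (herg m i j s).eventually_lt_const hε

lemma WeaklyErgodic.exists_half_le_doeblin {S : Type*} [Fintype S] [Nonempty S]
    [DecidableEq S] {p : ℕ → Matrix S S ℝ} (hp : ∀ k, IsStochastic (p k))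
    (herg : WeaklyErgodic p) (m : ℕ) :
    ∃ n, m ≤ n ∧ (1 / 2 : ℝ) ≤ doeblin (prodFromTo p m n) := by
  have hcard : (0 : ℝ) < Fintype.card S := by exact_mod_cast Fintype.card_pos
  obtain ⟨n, hclose, hmn⟩ :=
    ((herg.eventually_abs_sub_lt m (by positivity : (0 : ℝ) < 1 / (2 * Fintype.card S))).and
      (eventually_ge_atTop m)).exists
  refine ⟨n, hmn, ?_⟩
  have hbound := (isStochastic_prodFromTo hp m n).one_sub_card_mul_le_doeblin
    fun i j s => (hclose i j s).le
  have hhalf : (Fintype.card S : ℝ) * (1 / (2 * Fintype.card S)) = 1 / 2 := by field_simp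
  linarith

/-- The blocks are `[n_k, n_{k+1} - 1]` with `n_0 = 1` and `n_{k+1} - 1` a witness for `n_k`. -/
lemma exists_strictMono_of_forall_exists_le {P : ℕ → ℕ → Prop}
    (h : ∀ m, ∃ n, m ≤ n ∧ P m n) :
    ∃ nseq : ℕ → ℕ, StrictMono nseq ∧ (∀ k, 0 < nseq k) ∧ ∀ k, P (nseq k) (nseq (k + 1) - 1) := by
  choose f hle hP using h
  let nseq : ℕ → ℕ := fun k => Nat.rec 1 (fun _ n => f n + 1) k
  have hsucc : ∀ k, nseq (k + 1) = f (nseq k) + 1 := fun _ => rfl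
  refine ⟨nseq, strictMono_nat_of_lt_succ fun k => ?_, fun k => ?_, fun k => ?_⟩
  · rw [hsucc]
    exact Nat.lt_succ_of_le (hle _)
  · cases k with
    | zero => exact Nat.one_pos
    | succ k => rw [hsucc]; exact Nat.succ_pos _
  · rw [hsucc, Nat.add_sub_cancel]
    exact hP _

lemma tendsto_sum_range_atTop_of_le {f : ℕ → ℝ} {c : ℝ} (hc : 0 < c) (hf : ∀ k, c ≤ f k) :
    Tendsto (fun N => ∑ k ∈ range N, f k) atTop atTop :=
  tendsto_atTop_mono
    (fun N => by simpa using card_nsmul_le_sum (range N) f c fun k _ => hf k)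
    (tendsto_natCast_atTop_atTop.atTop_mul_const hc)

theorem weak_ergodicity_implies_doeblin_divergence {S : Type*} [Fintype S] [Nonempty S]
    [DecidableEq S]
    (p : ℕ → Matrix S S ℝ) (hp : ∀ k, IsStochastic (p k))
    (herg : WeaklyErgodic p) :
    (∀ m : ℕ, ∃ n, m ≤ n ∧ (1 / 2 : ℝ) ≤ doeblin (prodFromTo p m n)) ∧
    ∃ nseq : ℕ → ℕ, StrictMono nseq ∧ (∀ k, 0 < nseq k) ∧
      Tendsto
        (fun N => ∑ k ∈ Finset.range N, doeblin (prodFromTo p (nseq k) (nseq (k + 1) - 1)))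
        atTop atTop := by
  have hhalf := herg.exists_half_le_doeblin hp
  obtain ⟨nseq, hmono, hpos, hblock⟩ := exists_strictMono_of_forall_exists_le hhalf
  exact ⟨hhalf, nseq, hmono, hpos, tendsto_sum_range_atTop_of_le one_half_pos hblock⟩
end

section
/- Let S be a nonempty finite set, α ∈ (0,1], E ∈ ℰ with common row e, M ∈ 𝒫, and p = α·E + (1−α)·M a stochastic matrix that is irreducible and aperiodic. Then the matrix I − (1−α)·M is invertible, the row vector π = α·e·(I − (1−α)·M)^{−1} is the unique stationary distribution of p (that is, π is a probability distribution on S with π·p = π), and for every probability distribution μ on S and every n ≥ 1, the total variation distance satisfies (1/2)·Σ_{s∈S} |(μ·p^n)(s) − π(s)| ≤ 2·(1−α)^n. -/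
/-- Irreducibility: every state leads to every state in some positive number of steps. -/
def MatrixIrreducible {S : Type*} [Fintype S] [DecidableEq S] (p : Matrix S S ℝ) : Prop :=
  ∀ i j : S, ∃ n : ℕ, 1 ≤ n ∧ 0 < (p ^ n) i j

/-- Aperiodicity: for each state `i`, the gcd of the return times is 1, i.e. every common
divisor of `{n ≥ 1 : p^n(i,i) > 0}` equals 1. -/
def Aperiodic {S : Type*} [Fintype S] [DecidableEq S] (p : Matrix S S ℝ) : Prop :=
  ∀ i : S, ∀ d : ℕ, (∀ n : ℕ, 1 ≤ n → 0 < (p ^ n) i i → d ∣ n) → d = 1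

/-!
Write `β = 1 - α`. Since all rows of `E` equal `e`, every row vector satisfies
`x p = α (Σ x) e + β x M`, and multiplication by the stochastic matrix `M` does not increase the
`ℓ¹` norm. So `x ↦ β x M` is an `ℓ¹`-contraction: this makes `1 - β M` invertible, turns the
stationarity of a probability vector `ν` into the linear equation `ν (1 - β M) = α e` solved by
`π` alone, and on the zero-mass vector `μ - π` gives `‖(μ - π) pⁿ‖₁ ≤ βⁿ ‖μ - π‖₁ ≤ 2 βⁿ`.
-/

open Matrix Finset

namespace IsStochastic

variable {S : Type*} [Fintype S] {M : Matrix S S ℝ}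

theorem sum_vecMul (hM : IsStochastic M) (x : S → ℝ) : ∑ j, (x ᵥ* M) j = ∑ i, x i := by
  simp only [vecMul, dotProduct]
  rw [sum_comm]
  simp [← mul_sum, hM.2]

theorem sum_abs_vecMul_le (hM : IsStochastic M) (x : S → ℝ) :
    ∑ j, |(x ᵥ* M) j| ≤ ∑ i, |x i| :=
  calc ∑ j, |(x ᵥ* M) j| ≤ ∑ j, ∑ i, |x i| * M i j :=
        sum_le_sum fun j _ => (abs_sum_le_sum_abs _ _).trans_eq <|
          sum_congr rfl fun i _ => by rw [abs_mul, abs_of_nonneg (hM.1 i j)]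
    _ = ∑ i, |x i| := by
        rw [sum_comm]
        simp [← mul_sum, hM.2]

theorem eq_zero_of_eq_smul_vecMul (hM : IsStochastic M) {β : ℝ} (hβ : |β| < 1) {z : S → ℝ}
    (hz : z = β • z ᵥ* M) : z = 0 := by
  have hle : ∑ j, |z j| ≤ |β| * ∑ j, |z j| :=
    calc ∑ j, |z j| = |β| * ∑ j, |(z ᵥ* M) j| := by
          conv_lhs => rw [hz]
          simp [abs_mul, mul_sum]
      _ ≤ |β| * ∑ j, |z j| := mul_le_mul_of_nonneg_left (hM.sum_abs_vecMul_le z) (abs_nonneg β)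
  have hzero : ∑ j, |z j| = 0 := by
    nlinarith [sum_nonneg fun j (_ : j ∈ univ) => abs_nonneg (z j)]
  funext j
  simpa using (sum_eq_zero_iff_of_nonneg fun j _ => abs_nonneg (z j)).1 hzero j (mem_univ j)

/-- `Σ |x| - Σ x` is nonnegative, vanishes exactly when `x ≥ 0`, and is contracted by the factor
`β` along `x ↦ a + β • x ᵥ* M` when `a ≥ 0`. -/
theorem nonneg_of_eq_add_smul_vecMul (hM : IsStochastic M) {β : ℝ} (hβ0 : 0 ≤ β) (hβ1 : β < 1)
    {a x : S → ℝ} (ha : 0 ≤ a) (hx : x = a + β • x ᵥ* M) : 0 ≤ x := by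
  have habs : ∑ j, |x j| ≤ ∑ j, a j + β * ∑ j, |x j| :=
    calc ∑ j, |x j| ≤ ∑ j, (a j + β * |(x ᵥ* M) j|) := sum_le_sum fun j _ => by
          conv_lhs => rw [hx]
          simpa [abs_mul, abs_of_nonneg hβ0, abs_of_nonneg (ha j)] using
            abs_add_le (a j) (β * (x ᵥ* M) j)
      _ ≤ ∑ j, a j + β * ∑ j, |x j| := by
          rw [sum_add_distrib, ← mul_sum]
          exact add_le_add_right (mul_le_mul_of_nonneg_left (hM.sum_abs_vecMul_le x) hβ0) _
  have hsum : ∑ j, x j = ∑ j, a j + β * ∑ j, x j := by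
    conv_lhs => rw [hx]
    simp [sum_add_distrib, ← mul_sum, hM.sum_vecMul]
  have hle : ∀ j ∈ univ, x j ≤ |x j| := fun j _ => le_abs_self (x j)
  have heq : ∑ j, x j = ∑ j, |x j| :=
    le_antisymm (sum_le_sum hle) (by nlinarith [sum_le_sum hle])
  intro j
  exact abs_eq_self.1 ((sum_eq_sum_iff_of_le hle).1 heq j (mem_univ j)).symm

theorem isUnit_one_sub_smul [DecidableEq S] (hM : IsStochastic M) {β : ℝ} (hβ : |β| < 1) :
    IsUnit (1 - β • M) := by
  refine vecMul_injective_iff_isUnit.1 fun x y hxy => sub_eq_zero.1 ?_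
  refine hM.eq_zero_of_eq_smul_vecMul hβ (sub_eq_zero.1 ?_)
  have : (x - y) ᵥ* (1 - β • M) = 0 := by
    rw [sub_vecMul]
    exact sub_eq_zero.2 hxy
  rwa [vecMul_sub, vecMul_one, vecMul_smul] at this

end IsStochastic

theorem Matrix.vecMul_pow_eq_self {R S : Type*} [Semiring R] [Fintype S] [DecidableEq S]
    {p : Matrix S S R} {v : S → R} (h : v ᵥ* p = v) (n : ℕ) : v ᵥ* p ^ n = v := by
  induction n with
  | zero => simp
  | succ n ih => rw [pow_succ, ← vecMul_vecMul, ih, h]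

section Doeblin

variable {S : Type*} [Fintype S] {e : S → ℝ} {E M : Matrix S S ℝ}

theorem vecMul_eq_sum_smul_of_rows_eq (hEe : ∀ i j, E i j = e j) (x : S → ℝ) :
    x ᵥ* E = (∑ i, x i) • e := by
  funext j
  simp [vecMul, dotProduct, hEe, sum_mul]

theorem vecMul_smul_add_smul_of_rows_eq (hEe : ∀ i j, E i j = e j) (α β : ℝ) (x : S → ℝ) :
    x ᵥ* (α • E + β • M) = (α * ∑ i, x i) • e + β • x ᵥ* M := by
  rw [vecMul_add, vecMul_smul, vecMul_smul, vecMul_eq_sum_smul_of_rows_eq hEe, smul_smul]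

theorem vecMul_smul_add_smul_eq_self_iff [DecidableEq S] (hEe : ∀ i j, E i j = e j) (α β : ℝ)
    {ν : S → ℝ} (hν : ∑ i, ν i = 1) :
    ν ᵥ* (α • E + β • M) = ν ↔ ν ᵥ* (1 - β • M) = α • e := by
  rw [vecMul_smul_add_smul_of_rows_eq hEe, hν, mul_one, vecMul_sub, vecMul_one, vecMul_smul,
    sub_eq_iff_eq_add, eq_comm]

theorem sum_abs_vecMul_smul_add_smul_pow_le [DecidableEq S] (hEe : ∀ i j, E i j = e j)
    (hM : IsStochastic M) (α : ℝ) {β : ℝ} (hβ : 0 ≤ β) {x : S → ℝ} (hx : ∑ i, x i = 0)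
    (n : ℕ) : ∑ j, |(x ᵥ* (α • E + β • M) ^ n) j| ≤ β ^ n * ∑ i, |x i| := by
  induction n generalizing x with
  | zero => simp
  | succ n ih =>
    have hstep : x ᵥ* (α • E + β • M) = β • x ᵥ* M := by
      rw [vecMul_smul_add_smul_of_rows_eq hEe, hx, mul_zero, zero_smul, zero_add]
    have hsum : ∑ i, (β • x ᵥ* M) i = 0 := by simp [← mul_sum, hM.sum_vecMul, hx]
    calc ∑ j, |(x ᵥ* (α • E + β • M) ^ (n + 1)) j|
        = ∑ j, |((β • x ᵥ* M) ᵥ* (α • E + β • M) ^ n) j| := by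
          rw [pow_succ', ← vecMul_vecMul, hstep]
      _ ≤ β ^ n * ∑ i, |(β • x ᵥ* M) i| := ih hsum
      _ = β ^ n * (β * ∑ i, |(x ᵥ* M) i|) := by simp [abs_mul, abs_of_nonneg hβ, mul_sum]
      _ ≤ β ^ (n + 1) * ∑ i, |x i| := by
          rw [pow_succ, mul_assoc]
          exact mul_le_mul_of_nonneg_left
            (mul_le_mul_of_nonneg_left (hM.sum_abs_vecMul_le x) hβ) (pow_nonneg hβ n)

end Doeblin

theorem stationary_distribution_doeblin_general
    {S : Type*} [Fintype S] [DecidableEq S]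
    (e : S → ℝ) (he0 : ∀ s, 0 ≤ e s) (he1 : ∑ s, e s = 1)
    (α : ℝ) (hα0 : 0 < α) (hα1 : α ≤ 1)
    (E M p : Matrix S S ℝ)
    (hEe : ∀ i j, E i j = e j)
    (hM : IsStochastic M)
    (hp : p = α • E + (1 - α) • M) :
    IsUnit (1 - (1 - α) • M) ∧
    ∀ π : S → ℝ, π = α • Matrix.vecMul e (1 - (1 - α) • M)⁻¹ →
      (∀ s, 0 ≤ π s) ∧ (∑ s, π s = 1) ∧ Matrix.vecMul π p = π ∧
      (∀ ν : S → ℝ, (∀ s, 0 ≤ ν s) → (∑ s, ν s = 1) → Matrix.vecMul ν p = ν → ν = π) ∧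
      ∀ (μ : S → ℝ), (∀ s, 0 ≤ μ s) → (∑ s, μ s = 1) →
        ∀ n : ℕ, 1 ≤ n →
          (1 / 2 : ℝ) * ∑ s, |Matrix.vecMul μ (p ^ n) s - π s| ≤ 2 * (1 - α) ^ n := by
  have hβ0 : 0 ≤ 1 - α := by linarith
  have hA : IsUnit (1 - (1 - α) • M) :=
    hM.isUnit_one_sub_smul (abs_lt.2 ⟨by linarith, by linarith⟩)
  refine ⟨hA, fun π hπ => ?_⟩
  have hπA : π ᵥ* (1 - (1 - α) • M) = α • e := by
    rw [hπ, smul_vecMul, vecMul_vecMul, nonsing_inv_mul _ ((isUnit_iff_isUnit_det _).1 hA),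
      vecMul_one]
  have hπfix : π = α • e + (1 - α) • π ᵥ* M := by
    rwa [vecMul_sub, vecMul_one, vecMul_smul, sub_eq_iff_eq_add] at hπA
  have hπ1 : ∑ s, π s = 1 := by
    have hmass := congrArg (fun v => ∑ s, v s) hπfix
    simp only [Pi.add_apply, Pi.smul_apply, smul_eq_mul, sum_add_distrib, ← mul_sum,
      hM.sum_vecMul, he1] at hmass
    exact mul_left_cancel₀ hα0.ne' (by linarith : α * ∑ s, π s = α * 1)
  have hπ0 : 0 ≤ π := hM.nonneg_of_eq_add_smul_vecMul hβ0 (by linarith)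
    (smul_nonneg hα0.le he0) hπfix
  have hstat : ∀ ν : S → ℝ, ∑ s, ν s = 1 → (ν ᵥ* p = ν ↔ ν ᵥ* (1 - (1 - α) • M) = α • e) :=
    fun ν hν => hp ▸ vecMul_smul_add_smul_eq_self_iff hEe α (1 - α) hν
  have hπp : π ᵥ* p = π := (hstat π hπ1).2 hπA
  refine ⟨hπ0, hπ1, hπp, fun ν _ hν1 hνp => vecMul_injective_iff_isUnit.2 hA
    (((hstat ν hν1).1 hνp).trans hπA.symm), fun μ hμ0 hμ1 n _ => ?_⟩
  have hmass : ∑ s, (μ - π) s = 0 := by simp [sum_sub_distrib, hμ1, hπ1]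
  have hdist : ∑ s, |μ s - π s| ≤ 2 :=
    calc ∑ s, |μ s - π s| ≤ ∑ s, (μ s + π s) := sum_le_sum fun s _ => (abs_sub _ _).trans_eq
          (by rw [abs_of_nonneg (hμ0 s), abs_of_nonneg (hπ0 s)])
      _ = 2 := by rw [sum_add_distrib, hμ1, hπ1]; norm_num
  have hcontr := sum_abs_vecMul_smul_add_smul_pow_le hEe hM α hβ0 hmass n
  rw [← hp, sub_vecMul, vecMul_pow_eq_self hπp] at hcontr
  simp only [Pi.sub_apply] at hcontr
  nlinarith [mul_le_mul_of_nonneg_left hdist (pow_nonneg hβ0 n), pow_nonneg hβ0 n]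

theorem stationary_distribution_doeblin
    {S : Type*} [Fintype S] [Nonempty S] [DecidableEq S]
    (e : S → ℝ) (he0 : ∀ s, 0 ≤ e s) (he1 : ∑ s, e s = 1)
    (α : ℝ) (hα0 : 0 < α) (hα1 : α ≤ 1)
    (E M p : Matrix S S ℝ)
    (hE : IsStochastic E) (hEe : ∀ i j, E i j = e j)
    (hM : IsStochastic M)
    (hp : p = α • E + (1 - α) • M)
    (hps : IsStochastic p)
    (hirr : MatrixIrreducible p) (haper : Aperiodic p) :
    IsUnit (1 - (1 - α) • M) ∧
    ∀ π : S → ℝ, π = α • Matrix.vecMul e (1 - (1 - α) • M)⁻¹ →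
      (∀ s, 0 ≤ π s) ∧ (∑ s, π s = 1) ∧ Matrix.vecMul π p = π ∧
      (∀ ν : S → ℝ, (∀ s, 0 ≤ ν s) → (∑ s, ν s = 1) → Matrix.vecMul ν p = ν → ν = π) ∧
      ∀ (μ : S → ℝ), (∀ s, 0 ≤ μ s) → (∑ s, μ s = 1) →
        ∀ n : ℕ, 1 ≤ n →
          (1 / 2 : ℝ) * ∑ s, |Matrix.vecMul μ (p ^ n) s - π s| ≤ 2 * (1 - α) ^ n :=
  stationary_distribution_doeblin_general e he0 he1 α hα0 hα1 E M p hEe hM hp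
end
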